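/- arXiv:2305.18020 — 5 statements merged into one kernel-verified Lean document; each statement's English description precedes it below -/
import Mathlib

section
/- Let f and f̂ be two continuous strictly positive probability densities on [0,1] such that f, f̂ and u'' are all logconcave, and suppose f̂ is uniformly less variable than f, i.e., there exists p ∈ [0,1] such that f̂(t)/f(t) is nondecreasing on [0, p] and nonincreasing on [p, 1]. Let (s; x) be a solution of the dual system for (f, u) and (ŝ; x̂) a solution of the dual system for (f̂, u), and form the interleaved vectors z = (x₁, s₁, x₂, …, s_{N−1}, x_N) and ẑ = (x̂₁, ŝ₁, x̂₂, …, ŝ_{N−1}, x̂_N) of length 2N−1. Then ẑ crosses z at most once and from above: there exists n* ∈ {0, 1, …, 2N−1} such that ẑ_j ≥ z_j for all j ≤ n* and ẑ_j ≤ z_j for all j > n*. -/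
open MeasureTheory Set

/-- The mean of the "density" `g` conditional on the interval `(a, b)`. -/
noncomputable def condMean (g : ℝ → ℝ) (a b : ℝ) : ℝ :=
  (∫ t in a..b, t * g t) / (∫ t in a..b, g t)

/-- A strictly positive function on `[0,1]` is logconcave if its log is concave there. -/
def LogConcaveOn01 (g : ℝ → ℝ) : Prop :=
  ConcaveOn ℝ (Icc (0:ℝ) 1) fun t => Real.log (g t)

/-- The dual system: cutoffs `0 = s 0 < s 1 < … < s N = 1` and signals `x 1, …, x N`. -/
def DualSystem (g w : ℝ → ℝ) (N : ℕ) (s x : ℕ → ℝ) : Prop :=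
  s 0 = 0 ∧ s N = 1 ∧ (∀ k < N, s k < s (k + 1)) ∧
    (∀ k, 1 ≤ k → k ≤ N → x k = condMean g (s (k - 1)) (s k)) ∧
    (∀ k, 1 ≤ k → k ≤ N - 1 → s k = condMean w (x k) (x (k + 1)))

/-- The interleaved vector `z = (x 1, s 1, x 2, …, s (N-1), x N)`:
`z (2k-1) = x k` and `z (2k) = s k`. -/
noncomputable def zvec (s x : ℕ → ℝ) (j : ℕ) : ℝ :=
  if j % 2 = 1 then x ((j + 1) / 2) else s (j / 2)

/-!
Let `Δ = ẑ - z`, extended by `Δ 0 = Δ (2N) = 0`. Each interior entry of `z` is the conditional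
mean of a log-concave density (`f` for signals, `u''` for cutoffs) over the interval spanned by
its two neighbours. For a log-concave density, moving the endpoints of an interval by `δ` and `ε`
moves the mean by at least `min δ ε 0`, strictly unless `δ = ε`: a translation by `c ≥ 0` moves
it by at most `c`, because `g t / g (t + c)` is nondecreasing. Left of `p`, where `f̂ / f` is
nondecreasing, the mean under `f̂` is at least the one under `f`, so `Δ` obeys a discrete minimum
principle there; right of `p` it obeys the mirror maximum principle. A negative entry followed by
a positive one is therefore impossible: whatever their position relative to `p`, one of the two
principles, started from the boundary value `0`, forces the wrong sign on one of them.
-/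

section CondMean

variable {g : ℝ → ℝ} {a b c : ℝ}

theorem integral_pos_of_pos_on_Icc (hg : Continuous g) (hab : a < b)
    (hpos : ∀ t ∈ Icc a b, 0 < g t) : 0 < ∫ t in a..b, g t :=
  intervalIntegral.intervalIntegral_pos_of_pos_on (hg.intervalIntegrable a b)
    (fun t ht => hpos t (Ioo_subset_Icc_self ht)) hab

theorem integral_sub_mul_eq_condMean_sub_mul (hg : Continuous g)
    (hI : (∫ t in a..b, g t) ≠ 0) (c : ℝ) :
    ∫ t in a..b, (t - c) * g t = (condMean g a b - c) * ∫ t in a..b, g t := by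
  have h₁ : Continuous fun t => t * g t := by fun_prop
  have h₂ : Continuous fun t => c * g t := by fun_prop
  simp_rw [sub_mul]
  rw [intervalIntegral.integral_sub (h₁.intervalIntegrable a b) (h₂.intervalIntegrable a b),
    intervalIntegral.integral_const_mul, condMean, div_mul_cancel₀ _ hI]

theorem condMean_mem_Ioo (hg : Continuous g) (hab : a < b) (hpos : ∀ t ∈ Icc a b, 0 < g t) :
    condMean g a b ∈ Ioo a b := by
  have hI := integral_pos_of_pos_on_Icc hg hab hpos
  have hcont : ∀ c : ℝ, Continuous fun t => (t - c) * g t := fun c => by fun_prop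
  have hlo := intervalIntegral.intervalIntegral_pos_of_pos_on ((hcont a).intervalIntegrable a b)
    (fun t ht => mul_pos (sub_pos.2 ht.1) (hpos t (Ioo_subset_Icc_self ht))) hab
  have hhi : 0 < ∫ t in a..b, -((t - b) * g t) := intervalIntegral.intervalIntegral_pos_of_pos_on
    ((hcont b).neg.intervalIntegrable a b)
    (fun t ht => neg_pos.2 (mul_neg_of_neg_of_pos (sub_neg.2 ht.2)
      (hpos t (Ioo_subset_Icc_self ht)))) hab
  rw [intervalIntegral.integral_neg, integral_sub_mul_eq_condMean_sub_mul hg hI.ne'] at hhi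
  rw [integral_sub_mul_eq_condMean_sub_mul hg hI.ne'] at hlo
  constructor <;> nlinarith

theorem condMean_mem_Ioo_of_adjacent (hg : Continuous g) (hab : a < b) (hbc : b < c)
    (hpos : ∀ t ∈ Icc a c, 0 < g t) :
    condMean g a c ∈ Ioo (condMean g a b) (condMean g b c) := by
  have hpos₁ : ∀ t ∈ Icc a b, 0 < g t := fun t ht => hpos t ⟨ht.1, ht.2.trans hbc.le⟩
  have hpos₂ : ∀ t ∈ Icc b c, 0 < g t := fun t ht => hpos t ⟨hab.le.trans ht.1, ht.2⟩
  have hI₁ := integral_pos_of_pos_on_Icc hg hab hpos₁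
  have hI₂ := integral_pos_of_pos_on_Icc hg hbc hpos₂
  have hI := integral_pos_of_pos_on_Icc hg (hab.trans hbc) hpos
  have hm₁ := condMean_mem_Ioo hg hab hpos₁
  have hm₂ := condMean_mem_Ioo hg hbc hpos₂
  set m := condMean g a c
  have hsplit := intervalIntegral.integral_add_adjacent_intervals (μ := volume)
    ((show Continuous fun t => (t - m) * g t by fun_prop).intervalIntegrable a b)
    ((show Continuous fun t => (t - m) * g t by fun_prop).intervalIntegrable b c)
  rw [integral_sub_mul_eq_condMean_sub_mul hg hI₁.ne',
    integral_sub_mul_eq_condMean_sub_mul hg hI₂.ne', integral_sub_mul_eq_condMean_sub_mul hg hI.ne',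
    sub_self, zero_mul] at hsplit
  constructor
  · by_contra! h
    nlinarith [mul_nonneg (sub_nonneg.2 h) hI₁.le, mul_pos (sub_pos.2 (hm₁.2.trans hm₂.1)) hI₂]
  · by_contra! h
    nlinarith [mul_nonneg (sub_nonneg.2 h) hI₂.le, mul_pos (sub_pos.2 (hm₁.2.trans hm₂.1)) hI₁]

end CondMean

section LikelihoodRatio

variable {g₁ g₂ : ℝ → ℝ} {a b : ℝ}

theorem condMean_le_condMean_of_monotoneOn_div (hg₁ : Continuous g₁) (hg₂ : Continuous g₂)
    (hab : a < b) (hpos₁ : ∀ t ∈ Icc a b, 0 < g₁ t) (hpos₂ : ∀ t ∈ Icc a b, 0 < g₂ t)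
    (hmono : MonotoneOn (fun t => g₂ t / g₁ t) (Icc a b)) :
    condMean g₁ a b ≤ condMean g₂ a b := by
  set φ := condMean g₁ a b
  have hφ : φ ∈ Icc a b := Ioo_subset_Icc_self (condMean_mem_Ioo hg₁ hab hpos₁)
  set r := g₂ φ / g₁ φ
  have hI₁ := integral_pos_of_pos_on_Icc hg₁ hab hpos₁
  have hI₂ := integral_pos_of_pos_on_Icc hg₂ hab hpos₂
  -- `t - φ` and `g₂ t / g₁ t - r` have the same sign
  have hpt : ∀ t ∈ Icc a b, 0 ≤ (t - φ) * g₂ t - r * ((t - φ) * g₁ t) := by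
    intro t ht
    have hg₁t := hpos₁ t ht
    have e : (t - φ) * g₂ t - r * ((t - φ) * g₁ t) = (t - φ) * (g₂ t / g₁ t - r) * g₁ t := by
      field_simp
    rw [e]
    refine mul_nonneg ?_ hg₁t.le
    rcases le_total φ t with h | h
    · exact mul_nonneg (sub_nonneg.2 h) (sub_nonneg.2 (hmono hφ ht h))
    · exact mul_nonneg_of_nonpos_of_nonpos (sub_nonpos.2 h) (sub_nonpos.2 (hmono ht hφ h))
  have hint := intervalIntegral.integral_nonneg (μ := volume) hab.le hpt
  rw [intervalIntegral.integral_sub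
      ((show Continuous fun t => (t - φ) * g₂ t by fun_prop).intervalIntegrable a b)
      ((show Continuous fun t => r * ((t - φ) * g₁ t) by fun_prop).intervalIntegrable a b),
    intervalIntegral.integral_const_mul, integral_sub_mul_eq_condMean_sub_mul hg₂ hI₂.ne',
    integral_sub_mul_eq_condMean_sub_mul hg₁ hI₁.ne', sub_self, zero_mul, mul_zero,
    sub_zero] at hint
  exact sub_nonneg.1 (nonneg_of_mul_nonneg_left hint hI₂)

theorem condMean_le_condMean_of_antitoneOn_div (hg₁ : Continuous g₁) (hg₂ : Continuous g₂)
    (hab : a < b) (hpos₁ : ∀ t ∈ Icc a b, 0 < g₁ t) (hpos₂ : ∀ t ∈ Icc a b, 0 < g₂ t)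
    (hanti : AntitoneOn (fun t => g₂ t / g₁ t) (Icc a b)) :
    condMean g₂ a b ≤ condMean g₁ a b := by
  refine condMean_le_condMean_of_monotoneOn_div hg₂ hg₁ hab hpos₂ hpos₁ fun t ht t' ht' htt' => ?_
  simp only [← inv_div (g₂ _)]
  exact inv_anti₀ (div_pos (hpos₂ t' ht') (hpos₁ t' ht')) (hanti ht ht' htt')

end LikelihoodRatio

theorem ConcaveOn.map_add_sub_map_le {s : Set ℝ} {φ : ℝ → ℝ} (hφ : ConcaveOn ℝ s φ)
    {x y c : ℝ} (hx : x ∈ s) (hyc : y + c ∈ s) (hxy : x ≤ y) (hc : 0 ≤ c) :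
    φ (y + c) - φ y ≤ φ (x + c) - φ x := by
  rcases (hxy.trans (le_add_of_nonneg_right hc)).eq_or_lt with h | h
  · obtain rfl : c = 0 := by linarith
    obtain rfl : y = x := by linarith
    rfl
  -- `x + c` and `y` are the convex combinations of `x` and `y + c` with swapped weights
  set θ := (y - x) / (y + c - x)
  have hd : 0 < y + c - x := sub_pos.2 h
  have hθ₀ : 0 ≤ θ := div_nonneg (sub_nonneg.2 hxy) hd.le
  have hθ₁ : θ ≤ 1 := (div_le_one hd).2 (by linarith)
  have h₁ := hφ.2 hx hyc hθ₀ (sub_nonneg.2 hθ₁) (by ring)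
  have h₂ := hφ.2 hx hyc (sub_nonneg.2 hθ₁) hθ₀ (by ring)
  have e₁ : θ • x + (1 - θ) • (y + c) = x + c := by
    simp only [smul_eq_mul, θ]; field_simp; ring
  have e₂ : (1 - θ) • x + θ • (y + c) = y := by
    simp only [smul_eq_mul, θ]; field_simp; ring
  rw [e₁] at h₁
  rw [e₂] at h₂
  simp only [smul_eq_mul] at h₁ h₂
  linear_combination h₁ + h₂

def MinBound (l c r : ℝ) : Prop :=
  min l (min r 0) ≤ c ∧ (l ≠ r → min l (min r 0) < c)

namespace MinBound

variable {l c c' r : ℝ}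

theorem of_lt (h : min l (min r 0) < c) : MinBound l c r := ⟨h.le, fun _ => h⟩

theorem mono (h : MinBound l c r) (hc : c ≤ c') : MinBound l c' r :=
  ⟨h.1.trans hc, fun hne => (h.2 hne).trans_le hc⟩

theorem symm (h : MinBound l c r) : MinBound r c l := by
  rw [MinBound, min_left_comm, ne_comm]
  exact h

end MinBound

section LogConcave

variable {g : ℝ → ℝ} {I : Set ℝ} {a b c d a' b' : ℝ}

theorem condMean_comp_add_right (hg : Continuous g) (hI : (∫ t in (a + c)..(b + c), g t) ≠ 0) :
    condMean (fun t => g (t + c)) a b = condMean g (a + c) (b + c) - c := by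
  have hnum : ∫ t in a..b, t * g (t + c) = ∫ t in a..b, (fun u => (u - c) * g u) (t + c) := by
    simp only [add_sub_cancel_right]
  rw [condMean, hnum, intervalIntegral.integral_comp_add_right (fun u => (u - c) * g u),
    intervalIntegral.integral_comp_add_right g, integral_sub_mul_eq_condMean_sub_mul hg hI,
    mul_div_cancel_right₀ _ hI]

theorem monotoneOn_div_comp_add_right (hlc : ConcaveOn ℝ I fun t => Real.log (g t))
    (hpos : ∀ t ∈ I, 0 < g t) (ha : a ∈ I) (hbc : b + c ∈ I) (hc : 0 ≤ c) :
    MonotoneOn (fun t => g t / g (t + c)) (Icc a b) := by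
  have hsub : Icc a (b + c) ⊆ I := hlc.1.ordConnected.out ha hbc
  have hmem : ∀ t ∈ Icc a b, t ∈ I ∧ t + c ∈ I := fun t ht =>
    ⟨hsub ⟨ht.1, by linarith [ht.2]⟩, hsub ⟨by linarith [ht.1], by linarith [ht.2]⟩⟩
  intro t ht t' ht' htt'
  obtain ⟨h₁, h₂⟩ := hmem t ht
  obtain ⟨h₃, h₄⟩ := hmem t' ht'
  have hinc := hlc.map_add_sub_map_le h₁ h₄ htt' hc
  simp only at hinc ⊢
  rw [div_le_div_iff₀ (hpos _ h₂) (hpos _ h₄), ← Real.log_le_log_iff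
    (mul_pos (hpos _ h₁) (hpos _ h₄)) (mul_pos (hpos _ h₃) (hpos _ h₂)),
    Real.log_mul (hpos _ h₁).ne' (hpos _ h₄).ne', Real.log_mul (hpos _ h₃).ne' (hpos _ h₂).ne']
  linarith

theorem condMean_add_le_of_logConcave (hg : Continuous g)
    (hlc : ConcaveOn ℝ I fun t => Real.log (g t)) (hpos : ∀ t ∈ I, 0 < g t)
    (ha : a ∈ I) (hbc : b + c ∈ I) (hab : a < b) (hc : 0 ≤ c) :
    condMean g (a + c) (b + c) ≤ condMean g a b + c := by
  have hsub : Icc a (b + c) ⊆ I := hlc.1.ordConnected.out ha hbc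
  have hpos₁ : ∀ t ∈ Icc a b, 0 < g t := fun t ht => hpos t (hsub ⟨ht.1, by linarith [ht.2]⟩)
  have hpos₂ : ∀ t ∈ Icc a b, 0 < g (t + c) := fun t ht =>
    hpos _ (hsub ⟨by linarith [ht.1], by linarith [ht.2]⟩)
  have hI := integral_pos_of_pos_on_Icc hg (by linarith : a + c < b + c) fun t ht =>
    hpos t (hsub ⟨by linarith [ht.1], ht.2⟩)
  have h := condMean_le_condMean_of_monotoneOn_div (hg.comp (continuous_add_const c)) hg hab
    hpos₂ hpos₁ (monotoneOn_div_comp_add_right hlc hpos ha hbc hc)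
  rw [Function.comp_def, condMean_comp_add_right hg hI.ne'] at h
  linarith

theorem condMean_add_min_le (hg : Continuous g) (hlc : ConcaveOn ℝ I fun t => Real.log (g t))
    (hpos : ∀ t ∈ I, 0 < g t) (ha : a ∈ I) (hb : b ∈ I) (had : a + d ∈ I) (hbd : b + d ∈ I)
    (hab : a < b) : condMean g a b + min d 0 ≤ condMean g (a + d) (b + d) := by
  rcases lt_trichotomy d 0 with hd | rfl | hd
  · have h := condMean_add_le_of_logConcave (b := b + d) hg hlc hpos had (by simpa using hb)
      (by linarith) (neg_nonneg.2 hd.le)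
    simp only [add_neg_cancel_right] at h
    rw [min_eq_left hd.le]
    linarith
  · simp
  · have hpos' : ∀ t ∈ Icc a (b + d), 0 < g t := fun t ht =>
      hpos t (hlc.1.ordConnected.out ha hbd ht)
    have h₁ := (condMean_mem_Ioo_of_adjacent hg hab (lt_add_of_pos_right b hd) hpos').1
    have h₂ := (condMean_mem_Ioo_of_adjacent hg (lt_add_of_pos_right a hd)
      (by linarith : a + d < b + d) hpos').2
    rw [min_eq_right hd.le]
    linarith

theorem minBound_condMean_sub (hg : Continuous g)
    (hlc : ConcaveOn ℝ I fun t => Real.log (g t)) (hpos : ∀ t ∈ I, 0 < g t)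
    (ha : a ∈ I) (hb : b ∈ I) (ha' : a' ∈ I) (hb' : b' ∈ I) (hab : a < b) (hab' : a' < b') :
    MinBound (a' - a) (condMean g a' b' - condMean g a b) (b' - b) := by
  have hI := hlc.1.ordConnected
  rcases lt_trichotomy (a' - a) (b' - b) with h | h | h
  · -- slide `[a, b]` onto `[a', b + (a' - a)] ⊂ [a', b']`, then enlarge to the right
    have hmid : b + (a' - a) ∈ I := hI.out ha' hb' ⟨by linarith, by linarith⟩
    have h₁ := condMean_add_min_le hg hlc hpos ha hb (by simpa using ha') hmid hab
    have h₂ := (condMean_mem_Ioo_of_adjacent hg (by linarith : a' < b + (a' - a))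
      (by linarith : b + (a' - a) < b') fun t ht => hpos t (hI.out ha' hb' ht)).1
    simp only [add_sub_cancel] at h₁
    exact .of_lt (by linarith [min_le_min (le_refl (a' - a)) (min_le_right (b' - b) 0)])
  · have hb'eq : b + (a' - a) = b' := by linarith
    have h₁ := condMean_add_min_le hg hlc hpos ha hb (by simpa using ha') (hb'eq ▸ hb') hab
    simp only [add_sub_cancel, hb'eq] at h₁
    exact ⟨by linarith [min_le_min (le_refl (a' - a)) (min_le_right (b' - b) 0)],
      fun hne => absurd h hne⟩
  · -- shrink `[a, b]` from the left to `[a' - (b' - b), b]`, then slide onto `[a', b']`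
    have hmid : a' - (b' - b) ∈ I := hI.out ha hb ⟨by linarith, by linarith⟩
    have h₁ := condMean_add_min_le (d := b' - b) hg hlc hpos hmid hb (by simpa using ha')
      (by simpa using hb') (by linarith)
    have h₂ := (condMean_mem_Ioo_of_adjacent hg (by linarith : a < a' - (b' - b))
      (by linarith : a' - (b' - b) < b) fun t ht => hpos t (hI.out ha hb ht)).2
    simp only [sub_add_cancel, add_sub_cancel] at h₁
    exact .of_lt (by linarith [min_le_right (a' - a) (min (b' - b) 0)])

end LogConcave

section MinimumPrinciple

variable {Δ : ℕ → ℝ} {M m n i j : ℕ}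

/-- The first index where a negative minimum over `[0, m]` is attained would be interior with a
strictly larger left neighbour, which `MinBound` rules out. -/
theorem nonneg_of_minBound (h0 : Δ 0 = 0) (hm : 0 ≤ Δ m)
    (hΔ : ∀ j, 0 < j → j < m → MinBound (Δ (j - 1)) (Δ j) (Δ (j + 1))) (hi : i ≤ m) :
    0 ≤ Δ i := by
  by_contra! hneg
  have hex : ∃ j, j ≤ m ∧ ∀ k ≤ m, Δ j ≤ Δ k := by
    obtain ⟨j, hj, hmin⟩ := (Finset.range (m + 1)).exists_min_image Δ ⟨0, by simp⟩
    exact ⟨j, by simpa [Nat.lt_succ_iff] using hj,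
      fun k hk => hmin k (by simpa [Nat.lt_succ_iff] using hk)⟩
  obtain ⟨j, ⟨hjm, hjmin⟩, hfirst⟩ : ∃ j, (j ≤ m ∧ ∀ k ≤ m, Δ j ≤ Δ k) ∧
      ∀ j' < j, ¬(j' ≤ m ∧ ∀ k ≤ m, Δ j' ≤ Δ k) :=
    ⟨Nat.find hex, Nat.find_spec hex, fun _ => Nat.find_min hex⟩
  have hjneg : Δ j < 0 := (hjmin i hi).trans_lt hneg
  have hj0 : 0 < j := Nat.pos_of_ne_zero fun h => by rw [h, h0] at hjneg; exact hjneg.false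
  have hjm' : j < m := hjm.lt_of_ne fun h => by rw [h] at hjneg; linarith
  have hleft : Δ j < Δ (j - 1) := by
    by_contra! h
    exact hfirst _ (Nat.sub_lt hj0 one_pos) ⟨by omega, fun k hk => h.trans (hjmin k hk)⟩
  have hright : Δ j ≤ Δ (j + 1) := hjmin _ hjm'
  obtain ⟨hweak, hstrict⟩ := hΔ j hj0 hjm'
  rcases eq_or_ne (Δ (j - 1)) (Δ (j + 1)) with heq | hne
  · exact hweak.not_gt (lt_min hleft (lt_min (heq ▸ hleft) hjneg))
  · exact (hstrict hne).not_ge (le_min hleft.le (le_min hright hjneg.le))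

theorem nonpos_of_minBound_neg (hn : Δ n = 0) (hm : Δ m ≤ 0)
    (hΔ : ∀ j, m < j → j < n → MinBound (-Δ (j - 1)) (-Δ j) (-Δ (j + 1)))
    (hmi : m ≤ i) (hin : i ≤ n) : Δ i ≤ 0 := by
  have h := nonneg_of_minBound (Δ := fun k => -Δ (n - k)) (m := n - m) (i := n - i)
    (by simp [hn]) (by simpa [Nat.sub_sub_self (hmi.trans hin)]) ?_ (by omega)
  · simpa [Nat.sub_sub_self hin] using h
  · intro k hk hkm
    have h := (hΔ (n - k) (by omega) (by omega)).symm
    rwa [show n - k + 1 = n - (k - 1) by omega, show n - k - 1 = n - (k + 1) by omega] at h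

theorem nonpos_of_neg_of_le (h0 : Δ 0 = 0) (hn : Δ n = 0)
    (hlow : ∀ j, 0 < j → j < M → j < n → MinBound (Δ (j - 1)) (Δ j) (Δ (j + 1)))
    (hupp : ∀ j, M < j → j < n → MinBound (-Δ (j - 1)) (-Δ j) (-Δ (j + 1)))
    (hij : i ≤ j) (hjn : j ≤ n) (hi : Δ i < 0) : Δ j ≤ 0 := by
  by_contra! hj
  rcases le_total M i with hMi | hiM
  · exact hj.not_ge (nonpos_of_minBound_neg hn hi.le (fun l hl => hupp l (by omega)) hij hjn)
  rcases le_total j M with hjM | hMj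
  · exact hi.not_ge (nonneg_of_minBound h0 hj.le
      (fun l hl hlj => hlow l hl (by omega) (by omega)) hij)
  rcases le_total 0 (Δ M) with hM | hM
  · exact hi.not_ge (nonneg_of_minBound h0 hM (fun l hl hlM => hlow l hl hlM (by omega)) hiM)
  · exact hj.not_ge (nonpos_of_minBound_neg hn hM hupp hMj hjn)

end MinimumPrinciple

theorem exists_sign_change {Δ : ℕ → ℝ} {n : ℕ}
    (h : ∀ i j, i ≤ j → j ≤ n → Δ i < 0 → Δ j ≤ 0) :
    ∃ m ≤ n, ∀ j, 1 ≤ j → j ≤ n → (j ≤ m → 0 ≤ Δ j) ∧ (m < j → Δ j ≤ 0) := by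
  classical
  by_cases hex : ∃ i ≤ n, Δ i < 0
  · obtain ⟨hn, hneg⟩ := Nat.find_spec hex
    refine ⟨Nat.find hex - 1, by omega, fun j hj hjn => ⟨fun hjm => ?_, fun hjm => ?_⟩⟩
    · exact not_lt.1 fun hlt => Nat.find_min hex (by omega) ⟨hjn, hlt⟩
    · exact h _ j (by omega) hjn hneg
  · push Not at hex
    exact ⟨n, le_rfl, fun j _ hjn => ⟨fun _ => hex j hjn, fun hnj => absurd hjn (by omega)⟩⟩

section Interleaving

variable (s x : ℕ → ℝ) (k : ℕ)

@[simp] theorem zvec_two_mul : zvec s x (2 * k) = s k := by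
  simp [zvec]

@[simp] theorem zvec_two_mul_add_one : zvec s x (2 * k + 1) = x (k + 1) := by
  simp only [zvec, Nat.mul_add_mod_self_left, if_true]
  congr 1
  omega

theorem zvec_sub (s' x' : ℕ → ℝ) (j : ℕ) :
    zvec s' x' j - zvec s x j = zvec (s' - s) (x' - x) j := by
  unfold zvec
  split_ifs <;> rfl

theorem zvec_triple {S X : ℕ → ℝ} {P : ℝ → ℝ → ℝ → Prop} {j : ℕ} (hj : 0 < j)
    (heven : ∀ k, j = 2 * (k + 1) → P (X (k + 1)) (S (k + 1)) (X (k + 2)))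
    (hodd : ∀ k, j = 2 * k + 1 → P (S k) (X (k + 1)) (S (k + 1))) :
    P (zvec S X (j - 1)) (zvec S X j) (zvec S X (j + 1)) := by
  obtain ⟨k, rfl | rfl⟩ := Nat.even_or_odd' j
  · obtain ⟨k, rfl⟩ : ∃ k', k = k' + 1 := Nat.exists_eq_succ_of_ne_zero (by omega)
    rw [show 2 * (k + 1) - 1 = 2 * k + 1 by omega, zvec_two_mul_add_one, zvec_two_mul,
      zvec_two_mul_add_one]
    exact heven k rfl
  · rw [show 2 * k + 1 - 1 = 2 * k by omega, show 2 * k + 1 + 1 = 2 * (k + 1) by ring,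
      zvec_two_mul, zvec_two_mul_add_one, zvec_two_mul]
    exact hodd k rfl

end Interleaving

namespace DualSystem

variable {g g' w w' : ℝ → ℝ} {N k : ℕ} {s x s' x' : ℕ → ℝ}

theorem cutoff_monotoneOn (h : DualSystem g w N s x) : MonotoneOn s (Iic N) :=
  (strictMonoOn_Iic_of_lt_succ fun m hm => by simpa using h.2.2.1 m hm).monotoneOn

theorem cutoff_mem_Icc (h : DualSystem g w N s x) (hk : k ≤ N) : s k ∈ Icc 0 1 := by
  rw [← h.1, ← h.2.1]
  exact ⟨h.cutoff_monotoneOn (Nat.zero_le N) hk (Nat.zero_le k),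
    h.cutoff_monotoneOn hk (mem_Iic.2 le_rfl) hk⟩

theorem Icc_cutoff_subset (h : DualSystem g w N s x) (hk : k < N) :
    Icc (s k) (s (k + 1)) ⊆ Icc 0 1 :=
  Icc_subset_Icc (h.cutoff_mem_Icc hk.le).1 (h.cutoff_mem_Icc hk).2

theorem signal_eq (h : DualSystem g w N s x) (hk : k < N) :
    x (k + 1) = condMean g (s k) (s (k + 1)) := by
  simpa using h.2.2.2.1 (k + 1) (by omega) hk

theorem cutoff_eq (h : DualSystem g w N s x) (hk : k + 2 ≤ N) :
    s (k + 1) = condMean w (x (k + 1)) (x (k + 2)) :=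
  h.2.2.2.2 (k + 1) (by omega) (by omega)

theorem signal_mem_Ioo (h : DualSystem g w N s x) (hg : Continuous g)
    (hgpos : ∀ t ∈ Icc (0 : ℝ) 1, 0 < g t) (hk : k < N) :
    x (k + 1) ∈ Ioo (s k) (s (k + 1)) := by
  rw [h.signal_eq hk]
  exact condMean_mem_Ioo hg (h.2.2.1 k hk) fun t ht => hgpos t (h.Icc_cutoff_subset hk ht)

theorem signal_mem_Icc (h : DualSystem g w N s x) (hg : Continuous g)
    (hgpos : ∀ t ∈ Icc (0 : ℝ) 1, 0 < g t) (hk : k < N) : x (k + 1) ∈ Icc 0 1 :=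
  h.Icc_cutoff_subset hk (Ioo_subset_Icc_self (h.signal_mem_Ioo hg hgpos hk))

theorem signal_lt_signal (h : DualSystem g w N s x) (hg : Continuous g)
    (hgpos : ∀ t ∈ Icc (0 : ℝ) 1, 0 < g t) (hk : k + 2 ≤ N) : x (k + 1) < x (k + 2) :=
  (h.signal_mem_Ioo hg hgpos (k := k) (by omega)).2.trans
    (h.signal_mem_Ioo hg hgpos (k := k + 1) hk).1

theorem minBound_cutoff (h : DualSystem g w N s x) (h' : DualSystem g' w N s' x')
    (hg : Continuous g) (hgpos : ∀ t ∈ Icc (0 : ℝ) 1, 0 < g t)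
    (hg' : Continuous g') (hg'pos : ∀ t ∈ Icc (0 : ℝ) 1, 0 < g' t)
    (hw : Continuous w) (hwpos : ∀ t ∈ Icc (0 : ℝ) 1, 0 < w t) (hwlc : LogConcaveOn01 w)
    (hk : k + 2 ≤ N) :
    MinBound (x' (k + 1) - x (k + 1)) (s' (k + 1) - s (k + 1)) (x' (k + 2) - x (k + 2)) := by
  rw [h.cutoff_eq hk, h'.cutoff_eq hk]
  exact minBound_condMean_sub hw hwlc hwpos (h.signal_mem_Icc hg hgpos (by omega))
    (h.signal_mem_Icc hg hgpos hk) (h'.signal_mem_Icc hg' hg'pos (by omega))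
    (h'.signal_mem_Icc hg' hg'pos hk) (h.signal_lt_signal hg hgpos hk)
    (h'.signal_lt_signal hg' hg'pos hk)

theorem minBound_signal_of_monotoneOn (h : DualSystem g w N s x) (h' : DualSystem g' w' N s' x')
    (hg : Continuous g) (hgpos : ∀ t ∈ Icc (0 : ℝ) 1, 0 < g t) (hglc : LogConcaveOn01 g)
    (hg' : Continuous g') (hg'pos : ∀ t ∈ Icc (0 : ℝ) 1, 0 < g' t) (hk : k < N)
    (hratio : MonotoneOn (fun t => g' t / g t) (Icc (s' k) (s' (k + 1)))) :
    MinBound (s' k - s k) (x' (k + 1) - x (k + 1)) (s' (k + 1) - s (k + 1)) := by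
  have hsub := h'.Icc_cutoff_subset hk
  have hlr := condMean_le_condMean_of_monotoneOn_div hg hg' (h'.2.2.1 k hk)
    (fun t ht => hgpos t (hsub ht)) (fun t ht => hg'pos t (hsub ht)) hratio
  rw [h.signal_eq hk, h'.signal_eq hk]
  exact (minBound_condMean_sub hg hglc hgpos (h.cutoff_mem_Icc hk.le) (h.cutoff_mem_Icc hk)
    (h'.cutoff_mem_Icc hk.le) (h'.cutoff_mem_Icc hk) (h.2.2.1 k hk) (h'.2.2.1 k hk)).mono
    (by linarith)

theorem minBound_signal_of_antitoneOn (h : DualSystem g w N s x) (h' : DualSystem g' w' N s' x')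
    (hg : Continuous g) (hgpos : ∀ t ∈ Icc (0 : ℝ) 1, 0 < g t) (hglc : LogConcaveOn01 g)
    (hg' : Continuous g') (hg'pos : ∀ t ∈ Icc (0 : ℝ) 1, 0 < g' t) (hk : k < N)
    (hratio : AntitoneOn (fun t => g' t / g t) (Icc (s' k) (s' (k + 1)))) :
    MinBound (s k - s' k) (x (k + 1) - x' (k + 1)) (s (k + 1) - s' (k + 1)) := by
  have hsub := h'.Icc_cutoff_subset hk
  have hlr := condMean_le_condMean_of_antitoneOn_div hg hg' (h'.2.2.1 k hk)
    (fun t ht => hgpos t (hsub ht)) (fun t ht => hg'pos t (hsub ht)) hratio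
  rw [h.signal_eq hk, h'.signal_eq hk]
  exact (minBound_condMean_sub hg hglc hgpos (h'.cutoff_mem_Icc hk.le) (h'.cutoff_mem_Icc hk)
    (h.cutoff_mem_Icc hk.le) (h.cutoff_mem_Icc hk) (h'.2.2.1 k hk) (h.2.2.1 k hk)).mono
    (by linarith)

theorem minBound_zvec_sub_of_monotoneOn (h : DualSystem g w N s x) (h' : DualSystem g' w N s' x')
    (hg : Continuous g) (hgpos : ∀ t ∈ Icc (0 : ℝ) 1, 0 < g t) (hglc : LogConcaveOn01 g)
    (hg' : Continuous g') (hg'pos : ∀ t ∈ Icc (0 : ℝ) 1, 0 < g' t)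
    (hw : Continuous w) (hwpos : ∀ t ∈ Icc (0 : ℝ) 1, 0 < w t) (hwlc : LogConcaveOn01 w)
    {p : ℝ} (hratio : MonotoneOn (fun t => g' t / g t) (Icc 0 p)) {K j : ℕ} (hKN : K ≤ N)
    (hK : s' K ≤ p) (hj : 0 < j) (hjK : j ≤ 2 * K) (hjN : j < 2 * N) :
    MinBound (zvec (s' - s) (x' - x) (j - 1)) (zvec (s' - s) (x' - x) j)
      (zvec (s' - s) (x' - x) (j + 1)) :=
  zvec_triple (P := MinBound) hj
    (fun k hk => h.minBound_cutoff h' hg hgpos hg' hg'pos hw hwpos hwlc (by omega))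
    (fun k hk => h.minBound_signal_of_monotoneOn h' hg hgpos hglc hg' hg'pos (by omega)
      (hratio.mono (Icc_subset_Icc (h'.cutoff_mem_Icc (by omega)).1
        ((h'.cutoff_monotoneOn (mem_Iic.2 (by omega)) (mem_Iic.2 hKN) (by omega)).trans hK))))

theorem minBound_neg_zvec_sub_of_antitoneOn (h : DualSystem g w N s x)
    (h' : DualSystem g' w N s' x')
    (hg : Continuous g) (hgpos : ∀ t ∈ Icc (0 : ℝ) 1, 0 < g t) (hglc : LogConcaveOn01 g)
    (hg' : Continuous g') (hg'pos : ∀ t ∈ Icc (0 : ℝ) 1, 0 < g' t)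
    (hw : Continuous w) (hwpos : ∀ t ∈ Icc (0 : ℝ) 1, 0 < w t) (hwlc : LogConcaveOn01 w)
    {p : ℝ} (hratio : AntitoneOn (fun t => g' t / g t) (Icc p 1)) {K j : ℕ} (hK : p ≤ s' K)
    (hj : 0 < j) (hjK : 2 * K ≤ j) (hjN : j < 2 * N) :
    MinBound (-zvec (s' - s) (x' - x) (j - 1)) (-zvec (s' - s) (x' - x) j)
      (-zvec (s' - s) (x' - x) (j + 1)) :=
  zvec_triple (P := fun l c r => MinBound (-l) (-c) (-r)) hj
    (fun k hk => by
      simpa only [Pi.sub_apply, neg_sub] using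
        h'.minBound_cutoff h hg' hg'pos hg hgpos hw hwpos hwlc (by omega))
    (fun k hk => by
      simpa only [Pi.sub_apply, neg_sub] using
        h.minBound_signal_of_antitoneOn h' hg hgpos hglc hg' hg'pos (by omega)
          (hratio.mono (Icc_subset_Icc
            (hK.trans (h'.cutoff_monotoneOn (mem_Iic.2 (by omega)) (mem_Iic.2 (by omega))
              (by omega)))
            (h'.cutoff_mem_Icc (by omega)).2)))

end DualSystem

theorem stmt_8_general (f fhat u : ℝ → ℝ) (N : ℕ)
    (hf_cont : Continuous f) (hf_pos : ∀ t ∈ Icc (0:ℝ) 1, 0 < f t)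
    (hfhat_cont : Continuous fhat) (hfhat_pos : ∀ t ∈ Icc (0:ℝ) 1, 0 < fhat t)
    (hu : ContDiff ℝ 2 u)
    (hu'' : ∀ t ∈ Icc (0:ℝ) 1, 0 < deriv (deriv u) t)
    (hf_lc : LogConcaveOn01 f)
    (hu_lc : LogConcaveOn01 (deriv (deriv u)))
    (p : ℝ) (hp : p ∈ Icc (0:ℝ) 1)
    (hup : MonotoneOn (fun t => fhat t / f t) (Icc 0 p))
    (hdown : AntitoneOn (fun t => fhat t / f t) (Icc p 1))
    (s x shat xhat : ℕ → ℝ)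
    (h1 : DualSystem f (deriv (deriv u)) N s x)
    (h2 : DualSystem fhat (deriv (deriv u)) N shat xhat) :
    ∃ nstar ≤ 2 * N - 1, ∀ j, 1 ≤ j → j ≤ 2 * N - 1 →
      (j ≤ nstar → zvec s x j ≤ zvec shat xhat j) ∧
      (nstar < j → zvec shat xhat j ≤ zvec s x j) := by
  have hw : Continuous (deriv (deriv u)) := (hu.iterate_deriv' 0 2).continuous
  obtain ⟨K, hKN, hK, hK'⟩ : ∃ K ≤ N, shat K ≤ p ∧ ∀ k, K < k → k ≤ N → p < shat k :=
    ⟨Nat.findGreatest (fun k => shat k ≤ p) N, Nat.findGreatest_le N,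
      Nat.findGreatest_spec (P := fun k => shat k ≤ p) (Nat.zero_le N) (h2.1 ▸ hp.1),
      fun k hk hkN => not_le.1 (Nat.findGreatest_is_greatest hk hkN)⟩
  set Δ := zvec (shat - s) (xhat - x)
  -- no principle governs the entry `2 * K + 1`, the signal whose cell contains `p`
  have hlow : ∀ j, 0 < j → j < 2 * K + 1 → j < 2 * N →
      MinBound (Δ (j - 1)) (Δ j) (Δ (j + 1)) := fun j hj hjK hjN =>
    h1.minBound_zvec_sub_of_monotoneOn h2 hf_cont hf_pos hf_lc hfhat_cont hfhat_pos hw hu'' hu_lc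
      hup hKN hK hj (by omega) hjN
  have hupp : ∀ j, 2 * K + 1 < j → j < 2 * N →
      MinBound (-Δ (j - 1)) (-Δ j) (-Δ (j + 1)) := fun j hjK hjN =>
    h1.minBound_neg_zvec_sub_of_antitoneOn h2 hf_cont hf_pos hf_lc hfhat_cont hfhat_pos hw hu''
      hu_lc hdown (hK' (K + 1) (by omega) (by omega)).le (by omega) (by omega) hjN
  have hΔ0 : Δ 0 = 0 := by simp [Δ, zvec, h1.1, h2.1]
  have hΔN : Δ (2 * N) = 0 := by simp [Δ, h1.2.1, h2.2.1]
  obtain ⟨n, hn, hcross⟩ := exists_sign_change (Δ := Δ) (n := 2 * N - 1) fun i j hij hj hi =>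
    nonpos_of_neg_of_le hΔ0 hΔN hlow hupp hij (by omega) hi
  refine ⟨n, hn, fun j hj hjN => ?_⟩
  simpa only [Δ, ← zvec_sub, sub_nonneg, sub_nonpos] using hcross j hj hjN

/-- comparative statics under the uniform conditional variability order:
the new interleaved vector crosses the old one at most once and from above. -/
theorem stmt_8 (f fhat u : ℝ → ℝ) (N : ℕ) (hN : 2 ≤ N)
    (hf_cont : Continuous f) (hf_pos : ∀ t ∈ Icc (0:ℝ) 1, 0 < f t)
    (hf_prob : (∫ t in (0:ℝ)..1, f t) = 1)
    (hfhat_cont : Continuous fhat) (hfhat_pos : ∀ t ∈ Icc (0:ℝ) 1, 0 < fhat t)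
    (hfhat_prob : (∫ t in (0:ℝ)..1, fhat t) = 1)
    (hu : ContDiff ℝ 2 u)
    (hu'' : ∀ t ∈ Icc (0:ℝ) 1, 0 < deriv (deriv u) t)
    (hf_lc : LogConcaveOn01 f) (hfhat_lc : LogConcaveOn01 fhat)
    (hu_lc : LogConcaveOn01 (deriv (deriv u)))
    (p : ℝ) (hp : p ∈ Icc (0:ℝ) 1)
    (hup : MonotoneOn (fun t => fhat t / f t) (Icc 0 p))
    (hdown : AntitoneOn (fun t => fhat t / f t) (Icc p 1))
    (s x shat xhat : ℕ → ℝ)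
    (h1 : DualSystem f (deriv (deriv u)) N s x)
    (h2 : DualSystem fhat (deriv (deriv u)) N shat xhat) :
    ∃ nstar ≤ 2 * N - 1, ∀ j, 1 ≤ j → j ≤ 2 * N - 1 →
      (j ≤ nstar → zvec s x j ≤ zvec shat xhat j) ∧
      (nstar < j → zvec shat xhat j ≤ zvec s x j) :=
  stmt_8_general f fhat u N hf_cont hf_pos hfhat_cont hfhat_pos hu hu'' hf_lc hu_lc p hp hup hdown s
    x shat xhat h1 h2
end

section
/- Let u : [0,1] → ℝ be continuous and let N ≥ 1. Then the supremum of ∫ u dG over all probability measures G on [0,1] that are mean-preserving contractions of ν and whose support contains at most N points is attained by some such measure G. -/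
/-! A feasible measure has at most `N` atoms in `[0,1]`, so it is described by `N` locations
`xᵢ ∈ [0,1]` and `N` weights `pᵢ ≥ 0`. In these coordinates the contraction constraint reads
`∑ pᵢ (y - xᵢ)⁺ ≤ ∫₀ʸ F` for all `y`, a closed condition, and `∫ u dG = ∑ pᵢ u(xᵢ)` is continuous,
so the parameter set is compact and the supremum is attained. The set is nonempty because the
Dirac mass at the mean `m` of `ν` is feasible: by the layer-cake formula
`m = ∫₀¹ ν[t, ∞) dt ≥ ∫₀ʸ (1 - F) = y - ∫₀ʸ F`. -/

open MeasureTheory Set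

/-- The probability measure on `[0,1]` with density `f`. -/
noncomputable def densityMeasure (f : ℝ → ℝ) : Measure ℝ :=
  (volume.restrict (Icc (0:ℝ) 1)).withDensity fun t => ENNReal.ofReal (f t)

/-- `G` is a mean-preserving contraction of `ν`: it has the same mean and its
integral distribution function lies below that of `ν`. -/
def IsMPCof (ν G : Measure ℝ) : Prop :=
  (∫ t, t ∂G) = (∫ t, t ∂ν) ∧
    ∀ x ∈ Icc (0:ℝ) 1,
      (∫ t in (0:ℝ)..x, (G (Iic t)).toReal) ≤ ∫ t in (0:ℝ)..x, (ν (Iic t)).toReal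

/-- The support of `G` contains at most `N` points. -/
def FiniteSupportLE (G : Measure ℝ) (N : ℕ) : Prop :=
  ∃ S : Finset ℝ, S.card ≤ N ∧ G ((↑S : Set ℝ)ᶜ) = 0

/-- A feasible information structure: a probability measure on `[0,1]` that is a
mean-preserving contraction of `ν` and has at most `N` support points. -/
def Feasible (f : ℝ → ℝ) (N : ℕ) (G : Measure ℝ) : Prop :=
  IsProbabilityMeasure G ∧ G ((Icc (0:ℝ) 1)ᶜ) = 0 ∧
    IsMPCof (densityMeasure f) G ∧ FiniteSupportLE G N

section AtomicMeasure

variable {α ι : Type*} [MeasurableSpace α] [Fintype ι]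

-- Weights are clipped at `0` so that the measure is finite for every `p`.
noncomputable def atomicMeasure (x : ι → α) (p : ι → ℝ) : Measure α :=
  ∑ i, (p i).toNNReal • Measure.dirac (x i)

variable {x : ι → α} {p : ι → ℝ}

instance : IsFiniteMeasure (atomicMeasure x p) := by
  unfold atomicMeasure; infer_instance

lemma ae_atomicMeasure [MeasurableSingletonClass α] {P : α → Prop} (h : ∀ i, P (x i)) :
    ∀ᵐ t ∂atomicMeasure x p, P t := by
  rw [atomicMeasure, ae_finsetSum_measure_iff]
  exact fun i _ => Measure.ae_smul_measure (by simpa [ae_dirac_eq] using h i) _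

lemma measureReal_atomicMeasure (hp : ∀ i, 0 ≤ p i) (A : Set α) :
    (atomicMeasure x p).real A = ∑ i, p i * (Measure.dirac (x i)).real A := by
  simp [atomicMeasure, measureReal_def, Measure.finsetSum_apply,
    ENNReal.toReal_sum (fun i _ => ENNReal.mul_ne_top ENNReal.coe_ne_top (measure_ne_top _ _)),
    Real.coe_toNNReal _ (hp _)]

lemma integral_atomicMeasure [MeasurableSingletonClass α] (hp : ∀ i, 0 ≤ p i) (g : α → ℝ) :
    ∫ t, g t ∂atomicMeasure x p = ∑ i, p i * g (x i) := by
  rw [atomicMeasure, integral_finsetSum_measure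
    fun i _ => (integrable_dirac enorm_lt_top).smul_measure_nnreal]
  simp [integral_smul_nnreal_measure, NNReal.smul_def, Real.coe_toNNReal _ (hp _)]

lemma isProbabilityMeasure_atomicMeasure (hp : ∀ i, 0 ≤ p i) (hsum : ∑ i, p i = 1) :
    IsProbabilityMeasure (atomicMeasure x p) := by
  rw [isProbabilityMeasure_iff_real, measureReal_atomicMeasure hp]
  simp [hsum]

lemma exists_eq_atomicMeasure_of_ae_mem_finset [MeasurableSingletonClass α] {N : ℕ}
    (μ : Measure α) [IsFiniteMeasure μ] {S : Finset α} (hμ : ∀ᵐ t ∂μ, t ∈ S) (hS : S.card ≤ N)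
    (a : α) :
    ∃ (x : Fin N → α) (p : Fin N → ℝ), (∀ i, x i ∈ insert a (S : Set α)) ∧ (∀ i, 0 ≤ p i) ∧
      μ = atomicMeasure x p := by
  obtain ⟨e⟩ := Function.Embedding.nonempty_of_card_le (α := S) (β := Fin N) (by simpa using hS)
  refine ⟨Function.extend e Subtype.val fun _ => a, Function.extend e (fun s => μ.real {s.1}) 0,
    fun i => ?_, fun i => ?_, (Measure.ae_mem_finset_iff.mp hμ).trans ?_⟩
  · by_cases hi : ∃ s, e s = i
    · obtain ⟨s, rfl⟩ := hi
      simp [e.injective.extend_apply]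
    · simp [Function.extend_apply' _ _ _ hi]
  · by_cases hi : ∃ s, e s = i
    · obtain ⟨s, rfl⟩ := hi
      simp [e.injective.extend_apply]
    · simp [Function.extend_apply' _ _ _ hi]
  · rw [atomicMeasure, ← Finset.sum_coe_sort S]
    refine Fintype.sum_of_injective e e.injective _ _ (fun i hi => ?_) (fun s => ?_)
    · simp [Function.extend_apply' _ _ _ hi]
    · simp only [e.injective.extend_apply, measureReal_def, ENNReal.smul_def]
      exact congrArg (· • _) (ENNReal.ofReal_toReal (measure_ne_top _ _)).symm

end AtomicMeasure

lemma volume_Ici_inter_Ioc {a : ℝ} (ha : 0 ≤ a) (y : ℝ) :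
    volume (Ici a ∩ Ioc 0 y) = ENNReal.ofReal (y - a) := by
  refine le_antisymm ?_ ?_
  · rw [← Real.volume_Icc]
    exact measure_mono fun t ht => ⟨ht.1, ht.2.2⟩
  · rw [← Real.volume_Ioc]
    exact measure_mono fun t ht => ⟨ht.1.le, ha.trans_lt ht.1, ht.2⟩

lemma integral_measureReal_dirac_Iic {a y : ℝ} (ha : 0 ≤ a) (hy : 0 ≤ y) :
    ∫ t in (0:ℝ)..y, (Measure.dirac a).real (Iic t) = max (y - a) 0 := by
  have hind : (fun t => (Measure.dirac a).real (Iic t)) = (Ici a).indicator 1 := by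
    ext t
    by_cases h : a ≤ t <;> simp [measureReal_def, h]
  rw [hind, intervalIntegral.integral_of_le hy, integral_indicator_one measurableSet_Ici,
    measureReal_restrict_apply measurableSet_Ici, measureReal_def,
    volume_Ici_inter_Ioc ha y, ENNReal.toReal_ofReal']

lemma monotone_measureReal_Iic (μ : Measure ℝ) [IsFiniteMeasure μ] :
    Monotone fun t => μ.real (Iic t) :=
  fun _ _ h => measureReal_mono (Iic_subset_Iic.2 h)

lemma antitone_measureReal_Ici (μ : Measure ℝ) [IsFiniteMeasure μ] :
    Antitone fun t => μ.real (Ici t) :=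
  fun _ _ h => measureReal_mono (Ici_subset_Ici.2 h)

lemma integrable_id_of_ae_mem_Icc {ν : Measure ℝ} [IsFiniteMeasure ν]
    (hν : ∀ᵐ t ∂ν, t ∈ Icc (0:ℝ) 1) : Integrable id ν :=
  .of_bound aestronglyMeasurable_id 1 <|
    hν.mono fun t ht => by rw [id, Real.norm_of_nonneg ht.1]; exact ht.2

lemma sub_integral_le_integral_measureReal_Iic (ν : Measure ℝ) [IsProbabilityMeasure ν]
    (hν : ∀ᵐ t ∂ν, t ∈ Icc (0:ℝ) 1) {y : ℝ} (hy : y ∈ Icc (0:ℝ) 1) :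
    y - ∫ t, t ∂ν ≤ ∫ t in (0:ℝ)..y, ν.real (Iic t) := by
  have hmean : ∫ t, t ∂ν = ∫ t in (0:ℝ)..1, ν.real (Ici t) := by
    rw [intervalIntegral.integral_of_le zero_le_one]
    exact (integrable_id_of_ae_mem_Icc hν).integral_eq_integral_Ioc_meas_le
      (hν.mono fun t ht => ht.1) (hν.mono fun t ht => ht.2)
  have hcover (t : ℝ) : 1 ≤ ν.real (Ici t) + ν.real (Iic t) := by
    simpa [Ici_union_Iic] using measureReal_union_le (μ := ν) (Ici t) (Iic t)
  have hIic := (monotone_measureReal_Iic ν).intervalIntegrable (μ := volume) (a := 0) (b := y)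
  suffices y - ∫ t in (0:ℝ)..y, ν.real (Iic t) ≤ ∫ t, t ∂ν by linarith
  calc y - ∫ t in (0:ℝ)..y, ν.real (Iic t)
      = ∫ t in (0:ℝ)..y, (1 - ν.real (Iic t)) := by
        rw [intervalIntegral.integral_sub intervalIntegrable_const hIic]; simp
    _ ≤ ∫ t in (0:ℝ)..y, ν.real (Ici t) :=
        intervalIntegral.integral_mono_on hy.1 (intervalIntegrable_const.sub hIic)
          (antitone_measureReal_Ici ν).intervalIntegrable fun t _ => by linarith [hcover t]
    _ ≤ ∫ t in (0:ℝ)..1, ν.real (Ici t) :=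
        intervalIntegral.integral_mono_interval le_rfl hy.1 hy.2
          (ae_of_all _ fun _ => measureReal_nonneg) (antitone_measureReal_Ici ν).intervalIntegrable
    _ = ∫ t, t ∂ν := hmean.symm

lemma integral_measureReal_atomicMeasure_Iic {ι : Type*} [Fintype ι] {x p : ι → ℝ}
    (hx : ∀ i, 0 ≤ x i) (hp : ∀ i, 0 ≤ p i) {y : ℝ} (hy : 0 ≤ y) :
    ∫ t in (0:ℝ)..y, (atomicMeasure x p).real (Iic t) = ∑ i, p i * max (y - x i) 0 := by
  simp_rw [measureReal_atomicMeasure hp]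
  rw [intervalIntegral.integral_finsetSum fun i _ =>
    ((monotone_measureReal_Iic _).intervalIntegrable).const_mul (p i)]
  simp_rw [intervalIntegral.integral_const_mul, integral_measureReal_dirac_Iic (hx _) hy]

lemma isProbabilityMeasure_densityMeasure {f : ℝ → ℝ} (hf : IntegrableOn f (Icc 0 1))
    (hf_nonneg : ∀ t ∈ Icc (0:ℝ) 1, 0 ≤ f t) (hf_one : ∫ t in (0:ℝ)..1, f t = 1) :
    IsProbabilityMeasure (densityMeasure f) := by
  constructor
  rw [densityMeasure, withDensity_apply _ MeasurableSet.univ, Measure.restrict_univ,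
    ← ofReal_integral_eq_lintegral_ofReal hf
      (ae_restrict_of_forall_mem measurableSet_Icc hf_nonneg),
    integral_Icc_eq_integral_Ioc, ← intervalIntegral.integral_of_le zero_le_one, hf_one,
    ENNReal.ofReal_one]

lemma ae_densityMeasure_mem_Icc (f : ℝ → ℝ) : ∀ᵐ t ∂densityMeasure f, t ∈ Icc (0:ℝ) 1 :=
  (withDensity_absolutelyContinuous _ _).ae_le (ae_restrict_mem measurableSet_Icc)

def feasibleParams (ν : Measure ℝ) (N : ℕ) : Set ((Fin N → ℝ) × (Fin N → ℝ)) :=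
  {z | (∀ i, z.1 i ∈ Icc (0:ℝ) 1) ∧ (∀ i, 0 ≤ z.2 i) ∧ ∑ i, z.2 i = 1 ∧
    ∑ i, z.2 i * z.1 i = ∫ t, t ∂ν ∧
    ∀ y ∈ Icc (0:ℝ) 1, ∑ i, z.2 i * max (y - z.1 i) 0 ≤ ∫ t in (0:ℝ)..y, ν.real (Iic t)}

lemma isClosed_feasibleParams (ν : Measure ℝ) (N : ℕ) : IsClosed (feasibleParams ν N) := by
  simp only [feasibleParams, ofPred_and, ofPred_forall]
  refine .inter (isClosed_iInter fun i => isClosed_Icc.preimage (by fun_prop)) <|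
    .inter (isClosed_iInter fun i => isClosed_le (by fun_prop) (by fun_prop)) <|
    .inter (isClosed_eq (by fun_prop) (by fun_prop)) <|
    .inter (isClosed_eq (by fun_prop) (by fun_prop)) <|
    isClosed_biInter fun y _ => isClosed_le (by fun_prop) (by fun_prop)

lemma isCompact_feasibleParams (ν : Measure ℝ) (N : ℕ) : IsCompact (feasibleParams ν N) := by
  refine (isCompact_Icc (a := 0) (b := 1)).of_isClosed_subset (isClosed_feasibleParams ν N)
    fun z hz => ?_
  obtain ⟨hx, hp, hsum, -⟩ := hz
  refine ⟨⟨fun i => (hx i).1, hp⟩, fun i => (hx i).2, fun i => ?_⟩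
  calc z.2 i ≤ ∑ j, z.2 j := Finset.single_le_sum (fun j _ => hp j) (Finset.mem_univ i)
    _ = 1 := hsum

lemma feasibleParams_nonempty {N : ℕ} (hN : 1 ≤ N) (ν : Measure ℝ) [IsProbabilityMeasure ν]
    (hν : ∀ᵐ t ∂ν, t ∈ Icc (0:ℝ) 1) : (feasibleParams ν N).Nonempty := by
  have hsum : ∑ _ : Fin N, (N : ℝ)⁻¹ = 1 := by
    simp [mul_inv_cancel₀ (by positivity : (N : ℝ) ≠ 0)]
  have hmean : ∫ t, t ∂ν ∈ Icc (0:ℝ) 1 :=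
    (convex_Icc 0 1).integral_mem isClosed_Icc hν (integrable_id_of_ae_mem_Icc hν)
  -- all atoms sit at the mean, i.e. the point encodes `dirac (∫ t, t ∂ν)`
  refine ⟨(fun _ => ∫ t, t ∂ν, fun _ => (N : ℝ)⁻¹), fun _ => hmean, fun _ => by positivity,
    hsum, ?_, fun y hy => ?_⟩
  · dsimp only
    rw [← Finset.sum_mul, hsum, one_mul]
  · dsimp only
    rw [← Finset.sum_mul, hsum, one_mul]
    exact max_le (by linarith [sub_integral_le_integral_measureReal_Iic ν hν hy])
      (intervalIntegral.integral_nonneg hy.1 fun _ _ => measureReal_nonneg)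

section Feasible

variable {f : ℝ → ℝ} {N : ℕ}

lemma feasible_atomicMeasure {z : (Fin N → ℝ) × (Fin N → ℝ)}
    (hz : z ∈ feasibleParams (densityMeasure f) N) : Feasible f N (atomicMeasure z.1 z.2) := by
  obtain ⟨hx, hp, hsum, hmean, hcdf⟩ := hz
  refine ⟨isProbabilityMeasure_atomicMeasure hp hsum, ae_atomicMeasure hx,
    ⟨by rw [integral_atomicMeasure hp, hmean], fun y hy => ?_⟩,
    ⟨Finset.univ.image z.1, Finset.card_image_le.trans (by simp), ?_⟩⟩
  · simpa [← measureReal_def, integral_measureReal_atomicMeasure_Iic (fun i => (hx i).1) hp hy.1]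
      using hcdf y hy
  · exact ae_atomicMeasure (P := (· ∈ (Finset.univ.image z.1 : Set ℝ))) (by simp)

lemma Feasible.exists_eq_atomicMeasure {G : Measure ℝ} (hG : Feasible f N G) :
    ∃ z ∈ feasibleParams (densityMeasure f) N, G = atomicMeasure z.1 z.2 := by
  classical
  obtain ⟨hprob, hsupp, ⟨hmean, hcdf⟩, S, hcard, hS⟩ := hG
  have hmem : ∀ᵐ t ∂G, t ∈ S.filter (· ∈ Icc (0:ℝ) 1) := by
    filter_upwards [measure_eq_zero_iff_ae_notMem.mp hS, measure_eq_zero_iff_ae_notMem.mp hsupp]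
      with t h1 h2
    simpa using And.intro h1 h2
  obtain ⟨x, p, hx, hp, rfl⟩ := exists_eq_atomicMeasure_of_ae_mem_finset G hmem
    ((Finset.card_filter_le _ _).trans hcard) 0
  have hx : ∀ i, x i ∈ Icc (0:ℝ) 1 := fun i => by
    rcases hx i with h | h
    · rw [h]; exact ⟨le_rfl, zero_le_one⟩
    · exact (Finset.mem_filter.mp h).2
  refine ⟨(x, p), ⟨hx, hp, ?_, ?_, fun y hy => ?_⟩, rfl⟩
  · simpa [measureReal_atomicMeasure hp] using (probReal_univ (μ := atomicMeasure x p))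
  · rwa [integral_atomicMeasure hp] at hmean
  · simpa [← measureReal_def, integral_measureReal_atomicMeasure_Iic (fun i => (hx i).1) hp hy.1]
      using hcdf y hy

end Feasible

/-- existence of an optimal coarse information structure. -/
theorem stmt_10 (f u : ℝ → ℝ) (N : ℕ) (hN : 1 ≤ N)
    (hf_cont : Continuous f) (hf_pos : ∀ t ∈ Icc (0:ℝ) 1, 0 < f t)
    (hf_prob : (∫ t in (0:ℝ)..1, f t) = 1)
    (hu_cont : ContinuousOn u (Icc (0:ℝ) 1)) :
    ∃ G : Measure ℝ, Feasible f N G ∧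
      ∀ G' : Measure ℝ, Feasible f N G' → (∫ t, u t ∂G') ≤ ∫ t, u t ∂G := by
  have := isProbabilityMeasure_densityMeasure hf_cont.integrableOn_Icc
    (fun t ht => (hf_pos t ht).le) hf_prob
  have hobj : ContinuousOn (fun z : (Fin N → ℝ) × (Fin N → ℝ) => ∑ i, z.2 i * u (z.1 i))
      (feasibleParams (densityMeasure f) N) :=
    continuousOn_finsetSum _ fun i _ => (continuous_apply i |>.comp continuous_snd).continuousOn.mul
      (hu_cont.comp (by fun_prop) fun z hz => hz.1 i)
  obtain ⟨z, hz, hmax⟩ := (isCompact_feasibleParams _ N).exists_isMaxOn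
    (feasibleParams_nonempty hN _ (ae_densityMeasure_mem_Icc f)) hobj
  refine ⟨atomicMeasure z.1 z.2, feasible_atomicMeasure hz, fun G hG => ?_⟩
  obtain ⟨w, hw, rfl⟩ := hG.exists_eq_atomicMeasure
  rw [integral_atomicMeasure hw.2.1, integral_atomicMeasure hz.2.1]
  exact hmax hw
end

section
/- Let 0 ≤ a < b ≤ 1 and define I_F(x) = ∫₀^x F(t) dt. Then a real number x satisfies I_F(a) + F(a)·(x − a) = I_F(b) + F(b)·(x − b) if and only if x = φ(a,b), the mean of f conditional on (a,b). Consequently, if an increasing convex piecewise-linear integral distribution function is tangent to I_F at two adjacent points a and b (so that its two linear pieces on (a,b) have slopes F(a) and F(b) and match I_F at a and b) and has exactly one kink in (a,b), then that kink is located at the conditional mean φ(a,b). -/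
open MeasureTheory Set

/-- The cumulative distribution function `F(x) = ∫₀ˣ f`. -/
noncomputable def cdf (f : ℝ → ℝ) (x : ℝ) : ℝ := ∫ t in (0:ℝ)..x, f t

/-- The integral distribution function `I_F(x) = ∫₀ˣ F`. -/
noncomputable def intCdf (f : ℝ → ℝ) (x : ℝ) : ℝ := ∫ t in (0:ℝ)..x, cdf f t

/-- the two tangent lines of `I_F` at `a` and `b` meet exactly at the
conditional mean `φ(a,b)`; hence the unique kink of a two-piece tangent ICPL function
on `(a,b)` is located at the conditional mean. -/
theorem stmt_11 (f : ℝ → ℝ)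
    (hf_cont : Continuous f) (hf_pos : ∀ t ∈ Icc (0:ℝ) 1, 0 < f t)
    (a b : ℝ) (ha : 0 ≤ a) (hab : a < b) (hb : b ≤ 1) :
    (∀ x : ℝ,
      intCdf f a + cdf f a * (x - a) = intCdf f b + cdf f b * (x - b) ↔
        x = condMean f a b) ∧
    (∀ m ∈ Ioo a b,
      intCdf f a + cdf f a * (m - a) = intCdf f b + cdf f b * (m - b) →
        m = condMean f a b) := by
  have hint : ∀ (c d : ℝ), IntervalIntegrable f volume c d := fun c d =>
    hf_cont.intervalIntegrable c d
  have hD : 0 < ∫ t in a..b, f t := by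
    apply intervalIntegral.intervalIntegral_pos_of_pos_on (hint a b)
    · intro t ht
      exact hf_pos t ⟨le_trans ha ht.1.le, le_trans ht.2.le hb⟩
    · exact hab
  have hF : ∀ x : ℝ, HasDerivAt (cdf f) (f x) x := fun x =>
    intervalIntegral.integral_hasDerivAt_right (hint 0 x)
      hf_cont.aestronglyMeasurable.stronglyMeasurableAtFilter hf_cont.continuousAt
  have hFcont : Continuous (cdf f) := by
    rw [continuous_iff_continuousAt]
    exact fun x => (hF x).continuousAt
  have hparts : ∫ t in a..b, t * f t =
      b * cdf f b - a * cdf f a - ∫ t in a..b, 1 * cdf f t := by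
    apply intervalIntegral.integral_mul_deriv_eq_deriv_mul
      (fun t _ => hasDerivAt_id t) (fun t _ => hF t)
      (continuous_const.intervalIntegrable a b)
      (hf_cont.intervalIntegrable a b)
  have hI_eq : intCdf f b - intCdf f a = ∫ t in a..b, cdf f t := by
    rw [intCdf, intCdf,
      ← intervalIntegral.integral_add_adjacent_intervals
        (hFcont.intervalIntegrable 0 a) (hFcont.intervalIntegrable a b)]
    ring
  have hD_eq : (∫ t in a..b, f t) = cdf f b - cdf f a := by
    rw [cdf, cdf,
      ← intervalIntegral.integral_add_adjacent_intervals (hint 0 a) (hint a b)]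
    ring
  have hI' : intCdf f b - intCdf f a =
      b * cdf f b - a * cdf f a - ∫ t in a..b, t * f t := by
    rw [hI_eq, hparts]
    simp [intervalIntegral.integral_congr (g := cdf f) (fun t _ => one_mul (cdf f t))]
  have main : ∀ x : ℝ,
      intCdf f a + cdf f a * (x - a) = intCdf f b + cdf f b * (x - b) ↔
        x = condMean f a b := by
    intro x
    rw [condMean, eq_div_iff hD.ne']
    constructor
    · intro h
      linear_combination x * hD_eq - h - hI'
    · intro h
      linear_combination -h + x * hD_eq - hI'
  exact ⟨main, fun m _ h => (main m).mp h⟩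
end

section
/- If f is logconcave, then for any 0 ≤ a < b ≤ 1 and any ε ≥ 0 with b + ε ≤ 1, the conditional mean satisfies φ(a + ε, b + ε) ≤ φ(a, b) + ε. -/
/-!
Put `g t = f (t + ε)`. Concavity of `log f` makes its increments over a step of length `ε`
decrease, so `g / f` is nonincreasing on `[a, b]`. Reweighting a density by a nonincreasing
factor can only lower its mean: if `m` is the `f`-mean, then
`(t - m) * (g t * f m - f t * g m) ≤ 0` for every `t`, and integrating against `dt` shows that the
`g`-mean is at most `m`. The mean of `f` on `(a + ε, b + ε)` is the `g`-mean on `(a, b)` plus `ε`.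
-/

open MeasureTheory Set

theorem ConcaveOn.add_right_sub_le {S : Set ℝ} {h : ℝ → ℝ} (hh : ConcaveOn ℝ S h)
    {x y d : ℝ} (hx : x ∈ S) (hyd : y + d ∈ S) (hxy : x ≤ y) (hd : 0 ≤ d) :
    h (y + d) - h y ≤ h (x + d) - h x := by
  rcases hxy.eq_or_lt with rfl | hxy
  · rfl
  -- both `x + d` and `y` lie on the segment from `x` to `y + d`, with weights swapped
  have hden : 0 < y - x + d := by linarith
  set μ := d / (y - x + d)
  have hμ0 : 0 ≤ μ := by positivity
  have hμ1 : 0 ≤ 1 - μ := by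
    rw [sub_nonneg, div_le_one hden]
    linarith
  have hxd := hh.2 hx hyd hμ1 hμ0 (by ring)
  have hy := hh.2 hx hyd hμ0 hμ1 (by ring)
  have exd : (1 - μ) • x + μ • (y + d) = x + d := by
    simp only [smul_eq_mul, μ]
    field_simp
    ring
  have ey : μ • x + (1 - μ) • (y + d) = y := by
    simp only [smul_eq_mul, μ]
    field_simp
    ring
  rw [exd] at hxd
  rw [ey] at hy
  simp only [smul_eq_mul] at hxd hy
  linarith

theorem ConcaveOn.mul_shift_le_of_log {S : Set ℝ} {f : ℝ → ℝ}
    (hf : ConcaveOn ℝ S fun t => Real.log (f t)) (hpos : ∀ t ∈ S, 0 < f t)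
    {x y d : ℝ} (hx : x ∈ S) (hyd : y + d ∈ S) (hxy : x ≤ y) (hd : 0 ≤ d) :
    f (y + d) * f x ≤ f (x + d) * f y := by
  have hseg : Icc x (y + d) ⊆ S := hf.1.ordConnected.out hx hyd
  have hxd : 0 < f (x + d) := hpos _ (hseg ⟨by linarith, by linarith⟩)
  have hy : 0 < f y := hpos _ (hseg ⟨hxy, by linarith⟩)
  have hlog := hf.add_right_sub_le hx hyd hxy hd
  rw [← Real.log_le_log_iff (by positivity [hpos _ hx, hpos _ hyd]) (by positivity),
    Real.log_mul (hpos _ hyd).ne' (hpos _ hx).ne', Real.log_mul hxd.ne' hy.ne']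
  linarith

theorem integral_sub_const_mul {f : ℝ → ℝ} {a b : ℝ} (c : ℝ)
    (hf : IntervalIntegrable f volume a b) (hf' : IntervalIntegrable (fun t => t * f t) volume a b) :
    ∫ t in a..b, (t - c) * f t = (∫ t in a..b, t * f t) - c * ∫ t in a..b, f t := by
  rw [← intervalIntegral.integral_const_mul, ← intervalIntegral.integral_sub hf' (hf.const_mul c)]
  simp only [sub_mul]

theorem condMean_mem_Icc {f : ℝ → ℝ} {a b : ℝ} (hab : a < b) (hf : ContinuousOn f (Icc a b))
    (hpos : ∀ t ∈ Icc a b, 0 < f t) : condMean f a b ∈ Icc a b := by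
  rw [← uIcc_of_le hab.le] at hf
  have hint : 0 < ∫ t in a..b, f t :=
    intervalIntegral.intervalIntegral_pos_of_pos_on hf.intervalIntegrable
      (fun t ht => hpos t (Ioo_subset_Icc_self ht)) hab
  have hf' : IntervalIntegrable (fun t => t * f t) volume a b :=
    (continuousOn_id.mul hf).intervalIntegrable
  constructor
  · rw [condMean, le_div_iff₀ hint, ← intervalIntegral.integral_const_mul]
    exact intervalIntegral.integral_mono_on hab.le (hf.intervalIntegrable.const_mul a) hf'
      fun t ht => mul_le_mul_of_nonneg_right ht.1 (hpos t ht).le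
  · rw [condMean, div_le_iff₀ hint, ← intervalIntegral.integral_const_mul]
    exact intervalIntegral.integral_mono_on hab.le hf' (hf.intervalIntegrable.const_mul b)
      fun t ht => mul_le_mul_of_nonneg_right ht.2 (hpos t ht).le

theorem condMean_le_condMean_of_ratio_antitone {f g : ℝ → ℝ} {a b : ℝ} (hab : a < b)
    (hf : ContinuousOn f (Icc a b)) (hg : ContinuousOn g (Icc a b))
    (hf_pos : ∀ t ∈ Icc a b, 0 < f t) (hg_int : 0 < ∫ t in a..b, g t)
    (hratio : ∀ s ∈ Icc a b, ∀ t ∈ Icc a b, s ≤ t → g t * f s ≤ g s * f t) :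
    condMean g a b ≤ condMean f a b := by
  set m := condMean f a b with hm_def
  have hm : m ∈ Icc a b := condMean_mem_Icc hab hf hf_pos
  rw [← uIcc_of_le hab.le] at hf hg
  have hf_int : 0 < ∫ t in a..b, f t :=
    intervalIntegral.intervalIntegral_pos_of_pos_on hf.intervalIntegrable
      (fun t ht => hf_pos t (Ioo_subset_Icc_self ht)) hab
  have hmoment : ∫ t in a..b, (t - m) * f t = 0 := by
    rw [integral_sub_const_mul m hf.intervalIntegrable (continuousOn_id.mul hf).intervalIntegrable,
      sub_eq_zero, hm_def, condMean, div_mul_cancel₀ _ hf_int.ne']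
  have hpt : ∀ t ∈ Icc a b, (t - m) * g t * f m ≤ (t - m) * f t * g m := by
    intro t ht
    rcases le_total t m with htm | hmt
    · nlinarith [hratio t ht m hm htm]
    · nlinarith [hratio m hm t ht hmt]
  have hle : ∫ t in a..b, (t - m) * g t * f m ≤ ∫ t in a..b, (t - m) * f t * g m :=
    intervalIntegral.integral_mono_on hab.le
      (((continuousOn_id.sub continuousOn_const).mul hg).mul continuousOn_const).intervalIntegrable
      (((continuousOn_id.sub continuousOn_const).mul hf).mul continuousOn_const).intervalIntegrable
      hpt
  rw [intervalIntegral.integral_mul_const, intervalIntegral.integral_mul_const, hmoment,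
    zero_mul, integral_sub_const_mul m hg.intervalIntegrable
      (continuousOn_id.mul hg).intervalIntegrable] at hle
  have := nonpos_of_mul_nonpos_left hle (hf_pos m hm)
  rw [condMean, div_le_iff₀ hg_int]
  linarith

theorem condMean_add_right {f : ℝ → ℝ} {a b : ℝ} (ε : ℝ)
    (hf : IntervalIntegrable (fun t => f (t + ε)) volume a b)
    (hf' : IntervalIntegrable (fun t => t * f (t + ε)) volume a b)
    (h0 : ∫ t in a..b, f (t + ε) ≠ 0) :
    condMean f (a + ε) (b + ε) = condMean (fun t => f (t + ε)) a b + ε := by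
  have hsplit : ∫ t in a..b, (t + ε) * f (t + ε)
      = (∫ t in a..b, t * f (t + ε)) + ε * ∫ t in a..b, f (t + ε) := by
    rw [← intervalIntegral.integral_const_mul, ← intervalIntegral.integral_add hf' (hf.const_mul ε)]
    simp only [add_mul]
  rw [condMean, condMean, ← intervalIntegral.integral_comp_add_right f ε,
    ← intervalIntegral.integral_comp_add_right (fun t => t * f t) ε, hsplit, add_div,
    mul_div_cancel_right₀ _ h0]

theorem stmt_12_general (f : ℝ → ℝ)
    (hf_cont : Continuous f) (hf_pos : ∀ t ∈ Icc (0:ℝ) 1, 0 < f t)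
    (hf_lc : LogConcaveOn01 f)
    (a b ε : ℝ) (ha : 0 ≤ a) (hab : a < b)
    (hε : 0 ≤ ε) (hbε : b + ε ≤ 1) :
    condMean f (a + ε) (b + ε) ≤ condMean f a b + ε := by
  set g : ℝ → ℝ := fun t => f (t + ε)
  have hg_cont : Continuous g := hf_cont.comp (continuous_add_const ε)
  have hab_sub : Icc a b ⊆ Icc 0 1 := Icc_subset_Icc ha (by linarith)
  have hg_int : 0 < ∫ t in a..b, g t :=
    intervalIntegral.intervalIntegral_pos_of_pos_on (hg_cont.intervalIntegrable a b)
      (fun t ht => hf_pos _ ⟨by linarith [ht.1], by linarith [ht.2]⟩) hab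
  have hratio : ∀ s ∈ Icc a b, ∀ t ∈ Icc a b, s ≤ t → g t * f s ≤ g s * f t :=
    fun s hs t ht hst => hf_lc.mul_shift_le_of_log hf_pos (hab_sub hs)
      ⟨by linarith [ht.1], by linarith [ht.2]⟩ hst hε
  rw [condMean_add_right ε (hg_cont.intervalIntegrable a b)
    ((continuous_id.mul hg_cont).intervalIntegrable a b) hg_int.ne', add_le_add_iff_right]
  exact condMean_le_condMean_of_ratio_antitone hab hf_cont.continuousOn hg_cont.continuousOn
    (fun t ht => hf_pos t (hab_sub ht)) hg_int hratio

/-- translation property of conditional means for logconcave densities. -/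
theorem stmt_12 (f : ℝ → ℝ)
    (hf_cont : Continuous f) (hf_pos : ∀ t ∈ Icc (0:ℝ) 1, 0 < f t)
    (hf_lc : LogConcaveOn01 f)
    (a b ε : ℝ) (ha : 0 ≤ a) (hab : a < b) (hb : b ≤ 1)
    (hε : 0 ≤ ε) (hbε : b + ε ≤ 1) :
    condMean f (a + ε) (b + ε) ≤ condMean f a b + ε :=
  stmt_12_general f hf_cont hf_pos hf_lc a b ε ha hab hε hbε
end

section
/- Let F be the cumulative distribution function of a continuous strictly positive probability density f on [0,1], and let G be the cumulative distribution function of a probability measure on [0,1]. Suppose ∫₀^x (F(t) − G(t)) dt ≥ 0 for every x ∈ [0,1], with equality at some a ∈ (0,1). Then G is continuous at a and G(a) = F(a); i.e., at a point of tangency between the integral distributions I_G and I_F, the underlying distribution functions must coincide. -/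
/-! Since `I_F - I_G` attains its minimum `0` at `a`, we get `∫ₐˣ G ≤ ∫ₐˣ F` for `x > a`; as
`G ≥ G(a)` and `F ≤ F(x)` on `[a, x]`, this forces `G(a) ≤ F(x)`. Symmetrically `F(x) ≤ G(a⁻)`
for `x < a`. Letting `x → a` and using the continuity of `F` gives
`G(a) ≤ F(a) ≤ G(a⁻) ≤ G(a)`, and right continuity of `G` turns `G(a⁻) = G(a)` into continuity. -/

open MeasureTheory Set

noncomputable def cdfF (f : ℝ → ℝ) (x : ℝ) : ℝ := ∫ t in (0:ℝ)..x, f t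

open Function ProbabilityTheory intervalIntegral

theorem le_of_intervalIntegral_le_of_forall_Ioo {φ ψ : ℝ → ℝ} {a b c d : ℝ} (hab : a < b)
    (hφ : IntervalIntegrable φ volume a b) (hψ : IntervalIntegrable ψ volume a b)
    (hφc : ∀ t ∈ Ioo a b, φ t ≤ c) (hψd : ∀ t ∈ Ioo a b, d ≤ ψ t)
    (h : ∫ t in a..b, ψ t ≤ ∫ t in a..b, φ t) : d ≤ c := by
  have hd : (b - a) * d ≤ ∫ t in a..b, ψ t := by
    simpa using integral_mono_on_of_le_Ioo hab.le intervalIntegrable_const hψ hψd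
  have hc : ∫ t in a..b, φ t ≤ (b - a) * c := by
    simpa using integral_mono_on_of_le_Ioo hab.le hφ intervalIntegrable_const hφc
  exact le_of_mul_le_mul_left (hd.trans (h.trans hc)) (sub_pos.2 hab)

theorem StieltjesFunction.continuousAt_and_eq_of_le_of_le_leftLim {R : Type*} [LinearOrder R]
    [TopologicalSpace R] [OrderTopology R] (G : StieltjesFunction R) {a : R} {c : ℝ}
    (hGc : G a ≤ c) (hcG : c ≤ leftLim G a) : ContinuousAt G a ∧ G a = c := by
  have hleft : leftLim G a ≤ G a := G.mono.leftLim_le le_rfl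
  have hleft_eq : leftLim G a = G a := le_antisymm hleft (hGc.trans hcG)
  exact ⟨G.mono.continuousAt_iff_leftLim_eq_rightLim.2 (by rw [hleft_eq, G.rightLim_eq]),
    le_antisymm hGc (hcG.trans hleft)⟩

theorem Monotone.le_of_forall_intervalIntegral_le_right {F G : ℝ → ℝ} {a b : ℝ} (hab : a < b)
    (hG : Monotone G) (hF : ContinuousOn F (Icc a b)) (hFm : MonotoneOn F (Icc a b))
    (h : ∀ x ∈ Ioo a b, ∫ t in a..x, G t ≤ ∫ t in a..x, F t) : G a ≤ F a := by
  have hbound : ∀ x ∈ Ioo a b, G a ≤ F x := fun x hx =>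
    le_of_intervalIntegral_le_of_forall_Ioo hx.1
      ((hF.mono (Icc_subset_Icc_right hx.2.le)).intervalIntegrable_of_Icc hx.1.le)
      hG.intervalIntegrable
      (fun t ht => hFm ⟨ht.1.le, ht.2.le.trans hx.2.le⟩ (Ioo_subset_Icc_self hx) ht.2.le)
      (fun t ht => hG ht.1.le) (h x hx)
  exact ContinuousWithinAt.closure_le (f := fun _ => G a) (by simp [closure_Ioo hab.ne, hab.le])
    continuousWithinAt_const
    ((hF.continuousWithinAt (left_mem_Icc.2 hab.le)).mono Ioo_subset_Icc_self) hbound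

theorem Monotone.le_leftLim_of_forall_intervalIntegral_le_left {F G : ℝ → ℝ} {a b : ℝ}
    (hba : b < a) (hG : Monotone G) (hF : ContinuousOn F (Icc b a))
    (hFm : MonotoneOn F (Icc b a)) (h : ∀ x ∈ Ioo b a, ∫ t in x..a, F t ≤ ∫ t in x..a, G t) :
    F a ≤ leftLim G a := by
  have hbound : ∀ x ∈ Ioo b a, F x ≤ leftLim G a := fun x hx =>
    le_of_intervalIntegral_le_of_forall_Ioo hx.2 hG.intervalIntegrable
      ((hF.mono (Icc_subset_Icc_left hx.1.le)).intervalIntegrable_of_Icc hx.2.le)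
      (fun t ht => hG.le_leftLim ht.2)
      (fun t ht => hFm (Ioo_subset_Icc_self hx) ⟨hx.1.le.trans ht.1.le, ht.2.le⟩ ht.1.le) (h x hx)
  exact ContinuousWithinAt.closure_le (g := fun _ => leftLim G a)
    (by simp [closure_Ioo hba.ne, hba.le])
    ((hF.continuousWithinAt (right_mem_Icc.2 hba.le)).mono Ioo_subset_Icc_self)
    continuousWithinAt_const hbound

theorem continuous_cdfF {f : ℝ → ℝ} (hf : Continuous f) : Continuous (cdfF f) :=
  continuous_primitive (fun _ _ => hf.intervalIntegrable _ _) 0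

theorem monotoneOn_cdfF {f : ℝ → ℝ} {s : Set ℝ} (hs : OrdConnected s) (hf : Continuous f)
    (hf_nonneg : ∀ t ∈ s, 0 ≤ f t) : MonotoneOn (cdfF f) s := by
  intro x hx y hy hxy
  rw [cdfF, cdfF, ← sub_nonneg, integral_interval_sub_left (hf.intervalIntegrable _ _)
    (hf.intervalIntegrable _ _)]
  exact integral_nonneg hxy fun t ht => hf_nonneg t (hs.out hx hy ht)

theorem stmt_17_general (f : ℝ → ℝ)
    (hf_cont : Continuous f) (hf_pos : ∀ t ∈ Icc (0:ℝ) 1, 0 < f t)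
    (μ : Measure ℝ) [IsProbabilityMeasure μ]
    (a : ℝ) (ha : a ∈ Ioo (0:ℝ) 1)
    (hineq : ∀ x ∈ Icc (0:ℝ) 1,
      0 ≤ ∫ t in (0:ℝ)..x, (cdfF f t - (μ (Iic t)).toReal))
    (heq : (∫ t in (0:ℝ)..a, (cdfF f t - (μ (Iic t)).toReal)) = 0) :
    ContinuousAt (fun t => (μ (Iic t)).toReal) a ∧
      (μ (Iic a)).toReal = cdfF f a := by
  obtain ⟨ha0, ha1⟩ := ha
  simp only [← measureReal_def, ← cdf_eq_real] at hineq heq ⊢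
  set F := cdfF f
  set G := cdf μ
  have hF : Continuous F := continuous_cdfF hf_cont
  have hFmono : MonotoneOn F (Icc 0 1) := monotoneOn_cdfF ordConnected_Icc hf_cont
    fun t ht => (hf_pos t ht).le
  have hFi (x y : ℝ) : IntervalIntegrable F volume x y := hF.intervalIntegrable x y
  have hGi (x y : ℝ) : IntervalIntegrable G volume x y := G.mono.intervalIntegrable
  have hsplit (x : ℝ) : (∫ t in a..x, F t) - ∫ t in a..x, G t = ∫ t in 0..x, (F t - G t) := by
    rw [← integral_sub (hFi a x) (hGi a x), ← integral_interval_sub_left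
      ((hFi 0 x).sub (hGi 0 x)) ((hFi 0 a).sub (hGi 0 a)), heq, sub_zero]
  have hright : ∀ x ∈ Ioo a 1, ∫ t in a..x, G t ≤ ∫ t in a..x, F t := fun x hx => by
    linarith [hsplit x, hineq x ⟨ha0.le.trans hx.1.le, hx.2.le⟩]
  have hleft : ∀ x ∈ Ioo 0 a, ∫ t in x..a, F t ≤ ∫ t in x..a, G t := fun x hx => by
    linarith [hsplit x, hineq x ⟨hx.1.le, hx.2.le.trans ha1.le⟩,
      integral_symm (f := F) (μ := volume) a x, integral_symm (f := G) (μ := volume) a x]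
  exact G.continuousAt_and_eq_of_le_of_le_leftLim
    (G.mono.le_of_forall_intervalIntegral_le_right ha1 hF.continuousOn
      (hFmono.mono (Icc_subset_Icc_left ha0.le)) hright)
    (G.mono.le_leftLim_of_forall_intervalIntegral_le_left ha0 hF.continuousOn
      (hFmono.mono (Icc_subset_Icc_right ha1.le)) hleft)

/-- at a tangency point of the integral distributions, the two
distribution functions coincide and the discrete one is continuous there. -/
theorem stmt_17 (f : ℝ → ℝ)
    (hf_cont : Continuous f) (hf_pos : ∀ t ∈ Icc (0:ℝ) 1, 0 < f t)
    (hf_prob : (∫ t in (0:ℝ)..1, f t) = 1)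
    (μ : Measure ℝ) [IsProbabilityMeasure μ] (hsupp : μ ((Icc (0:ℝ) 1)ᶜ) = 0)
    (a : ℝ) (ha : a ∈ Ioo (0:ℝ) 1)
    (hineq : ∀ x ∈ Icc (0:ℝ) 1,
      0 ≤ ∫ t in (0:ℝ)..x, (cdfF f t - (μ (Iic t)).toReal))
    (heq : (∫ t in (0:ℝ)..a, (cdfF f t - (μ (Iic t)).toReal)) = 0) :
    ContinuousAt (fun t => (μ (Iic t)).toReal) a ∧
      (μ (Iic a)).toReal = cdfF f a :=
  stmt_17_general f hf_cont hf_pos μ a ha hineq heq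
end
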